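/- The function f(x) = x₃ + 2√(x₂x₄) − x₁ is strictly Schur-concave on the set Z₄ = {x ∈ ℝ⁴ : x₁ ≥ x₂ ≥ x₃ ≥ x₄ ≥ 0}: if x, y ∈ Z₄ with x ≻ y and x is not a permutation of y, then f(x) < f(y). -/

import Mathlib

/-- The sum of the `k` largest entries of `u`. -/
noncomputable def maxSum {n : ℕ} (u : Fin n → ℝ) (k : ℕ) : ℝ :=
  sSup {s : ℝ | ∃ A : Finset (Fin n), A.card = k ∧ ∑ i ∈ A, u i = s}

/-- `Majorizes v u` means `u ≺ v`. -/
def Majorizes {n : ℕ} (v u : Fin n → ℝ) : Prop :=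
  (∀ k : ℕ, maxSum u k ≤ maxSum v k) ∧ ∑ i, u i = ∑ i, v i

/-!
Majorization of vectors sorted in decreasing order is the system of prefix-sum inequalities
`p ≤ a`, `p + q ≤ a + b`, `p + q + r ≤ a + b + c` with equal totals, for `y = (p, q, r, t) ≺
x = (a, b, c, d)`. Given these, multiplying `f(y) - f(x)` by `√q √t` yields a sum of four
nonnegative terms: the prefix-sum gaps weighted by the increments of the gradient
`(-1, √(t/q), 1, √(q/t))` of `f` at `y` (nondecreasing on `Z₄`), plus the concavity defect
`(√b √t - √d √q)²` of the geometric mean. If all four vanish then `x = y`; the case `t = 0`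
is linear.
-/

open Finset

lemma Finset.sum_le_sum_of_card_eq_of_forall_le {ι M : Type*} [DecidableEq ι] [AddCommMonoid M]
    [LinearOrder M] [IsOrderedCancelAddMonoid M] {s t : Finset ι} {f : ι → M} (hcard : #s = #t)
    (h : ∀ i ∈ s \ t, ∀ j ∈ t \ s, f i ≤ f j) : ∑ i ∈ s, f i ≤ ∑ i ∈ t, f i := by
  rw [← sum_sdiff_le_sum_sdiff]
  rcases (s \ t).eq_empty_or_nonempty with hst | hst
  · have hts : t \ s = ∅ := card_eq_zero.mp (by rw [← card_sdiff_comm hcard, hst, card_empty])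
    simp [hst, hts]
  · calc ∑ i ∈ s \ t, f i ≤ #(s \ t) • (s \ t).sup' hst f :=
          sum_le_card_nsmul _ _ _ fun i hi => le_sup' f hi
      _ = #(t \ s) • (s \ t).sup' hst f := by rw [card_sdiff_comm hcard]
      _ ≤ ∑ j ∈ t \ s, f j :=
          card_nsmul_le_sum _ _ _ fun j hj => sup'_le hst f fun i hi => h i hi j hj

lemma Fin.card_filter_val_lt_of_le {n k : ℕ} (hk : k ≤ n) : #{i : Fin n | i.val < k} = k := by
  rw [Fin.card_filter_val_lt, min_eq_right hk]

section Majorization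

variable {n : ℕ}

lemma sum_le_maxSum (u : Fin n → ℝ) (A : Finset (Fin n)) : ∑ i ∈ A, u i ≤ maxSum u #A :=
  le_csSup ((Set.finite_range fun B : Finset (Fin n) => ∑ i ∈ B, u i).bddAbove.mono
    (by rintro _ ⟨B, -, rfl⟩; exact ⟨B, rfl⟩)) ⟨A, rfl, rfl⟩

lemma sum_val_lt_le_maxSum (u : Fin n → ℝ) {k : ℕ} (hk : k ≤ n) :
    ∑ i : Fin n with i.val < k, u i ≤ maxSum u k :=
  (sum_le_maxSum u _).trans_eq (by rw [Fin.card_filter_val_lt_of_le hk])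

lemma Antitone.maxSum_eq {u : Fin n → ℝ} (hu : Antitone u) {k : ℕ} (hk : k ≤ n) :
    maxSum u k = ∑ i : Fin n with i.val < k, u i := by
  have hcard := Fin.card_filter_val_lt_of_le hk
  refine le_antisymm (csSup_le ⟨_, _, hcard, rfl⟩ ?_) (sum_val_lt_le_maxSum u hk)
  rintro _ ⟨A, hA, rfl⟩
  refine sum_le_sum_of_card_eq_of_forall_le (hA.trans hcard.symm) fun i hi j hj => hu ?_
  simp only [mem_sdiff, mem_filter, mem_univ, true_and] at hi hj
  exact Fin.le_def.mpr (by omega)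

lemma Majorizes.sum_val_lt_le {u v : Fin n → ℝ} (h : Majorizes v u) (hv : Antitone v) {k : ℕ}
    (hk : k ≤ n) : ∑ i : Fin n with i.val < k, u i ≤ ∑ i : Fin n with i.val < k, v i :=
  calc ∑ i : Fin n with i.val < k, u i ≤ maxSum u k := sum_val_lt_le_maxSum u hk
    _ ≤ maxSum v k := h.1 k
    _ = _ := hv.maxSum_eq hk

end Majorization

noncomputable def boundaryFun (a b c d : ℝ) : ℝ := c + 2 * √(b * d) - a

section BoundaryFunction

variable {a b c d p q r t : ℝ}

lemma boundaryFun_sub_mul_sqrt (hb : 0 ≤ b) (hd : 0 ≤ d) (hq : 0 ≤ q) (ht : 0 ≤ t)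
    (hsum : p + q + r + t = a + b + c + d) :
    (boundaryFun p q r t - boundaryFun a b c d) * (√q * √t) =
      (a - p) * √t * (√q + √t) + (a + b - (p + q)) * √t * (√q - √t) +
        (t - d) * √q * (√q - √t) + (√b * √t - √d * √q) ^ 2 := by
  rw [boundaryFun, boundaryFun, Real.sqrt_mul hb, Real.sqrt_mul hq]
  linear_combination (√q * √t) * hsum - √t ^ 2 * Real.sq_sqrt hb - √q ^ 2 * Real.sq_sqrt hd
    + √t ^ 2 * Real.sq_sqrt hq + √q ^ 2 * Real.sq_sqrt ht

lemma eq_of_boundaryFun_le_of_pos (hbc : c ≤ b) (hcd : d ≤ c) (hd : 0 ≤ d) (hrq : r ≤ q)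
    (htr : t ≤ r) (ht : 0 < t) (h1 : p ≤ a) (h2 : p + q ≤ a + b) (h3 : p + q + r ≤ a + b + c)
    (hsum : p + q + r + t = a + b + c + d) (hle : boundaryFun p q r t ≤ boundaryFun a b c d) :
    (a, b, c, d) = (p, q, r, t) := by
  have hb : 0 ≤ b := hd.trans (hcd.trans hbc)
  have hq : 0 ≤ q := ht.le.trans (htr.trans hrq)
  have hT : 0 < √t := Real.sqrt_pos.mpr ht
  have hTQ : √t ≤ √q := Real.sqrt_le_sqrt (htr.trans hrq)
  have hid := boundaryFun_sub_mul_sqrt hb hd hq ht.le hsum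
  have hnonpos : (boundaryFun p q r t - boundaryFun a b c d) * (√q * √t) ≤ 0 :=
    mul_nonpos_of_nonpos_of_nonneg (sub_nonpos.mpr hle) (by positivity)
  have e1 : 0 ≤ (a - p) * √t * (√q + √t) := by have := sub_nonneg.mpr h1; positivity
  have e2 : 0 ≤ (a + b - (p + q)) * √t * (√q - √t) :=
    mul_nonneg (mul_nonneg (by linarith) hT.le) (by linarith)
  have e3 : 0 ≤ (t - d) * √q * (√q - √t) :=
    mul_nonneg (mul_nonneg (by linarith) (Real.sqrt_nonneg q)) (by linarith)
  have e4 : 0 ≤ (√b * √t - √d * √q) ^ 2 := sq_nonneg _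
  have ha : a = p := by
    have : (a - p) * √t * (√q + √t) = 0 := by linarith
    simpa [hT.ne', (add_pos_of_nonneg_of_pos (Real.sqrt_nonneg q) hT).ne', sub_eq_zero] using this
  simp only [Prod.mk.injEq]
  rcases hTQ.eq_or_lt with hTQ | hTQ
  · -- then `q = r = t`, and the vanishing of the last square forces `b = c = d`
    have hqt : q = t := (Real.sqrt_inj hq ht.le).mp hTQ.symm
    have hbd : b = d := by
      have : √b * √t = √d * √q := by nlinarith
      rw [← hTQ] at this
      exact (Real.sqrt_inj hb hd).mp (mul_right_cancel₀ hT.ne' this)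
    refine ⟨ha, ?_, ?_, ?_⟩ <;> linarith
  · have hab : a + b = p + q := by
      have : (a + b - (p + q)) * √t * (√q - √t) = 0 := by linarith
      simpa [hT.ne', (sub_pos.mpr hTQ).ne', sub_eq_zero] using this
    have htd : t = d := by
      have : (t - d) * √q * (√q - √t) = 0 := by linarith
      simpa [(hT.trans hTQ).ne', (sub_pos.mpr hTQ).ne', sub_eq_zero] using this
    refine ⟨ha, ?_, ?_, ?_⟩ <;> linarith

lemma boundaryFun_lt_of_sum_le (hbc : c ≤ b) (hcd : d ≤ c) (hd : 0 ≤ d) (hrq : r ≤ q)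
    (htr : t ≤ r) (h1 : p ≤ a) (h2 : p + q ≤ a + b) (h3 : p + q + r ≤ a + b + c)
    (hsum : p + q + r + t = a + b + c + d) (hne : (a, b, c, d) ≠ (p, q, r, t)) :
    boundaryFun a b c d < boundaryFun p q r t := by
  by_contra! hle
  have hdt : d ≤ t := by linarith
  rcases (hd.trans hdt).eq_or_lt with rfl | ht
  · obtain rfl : d = 0 := le_antisymm hdt hd
    simp only [boundaryFun, mul_zero, Real.sqrt_zero] at hle
    refine hne ?_
    simp only [Prod.mk.injEq, and_true]
    refine ⟨?_, ?_, ?_⟩ <;> linarith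
  · exact hne (eq_of_boundaryFun_le_of_pos hbc hcd hd hrq htr ht h1 h2 h3 hsum hle)

end BoundaryFunction

theorem strict_schur_concave_two_qubit_boundary_function (x y : Fin 4 → ℝ)
    (hx : x 0 ≥ x 1 ∧ x 1 ≥ x 2 ∧ x 2 ≥ x 3 ∧ x 3 ≥ 0)
    (hy : y 0 ≥ y 1 ∧ y 1 ≥ y 2 ∧ y 2 ≥ y 3 ∧ y 3 ≥ 0)
    (hmaj : Majorizes x y) (hne : x ≠ y) :
    x 2 + 2 * Real.sqrt (x 1 * x 3) - x 0 < y 2 + 2 * Real.sqrt (y 1 * y 3) - y 0 := by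
  obtain ⟨hx01, hx12, hx23, hx3⟩ := hx
  obtain ⟨-, hy12, hy23, -⟩ := hy
  have hanti : Antitone x := Fin.antitone_iff_succ_le.mpr fun i => by fin_cases i <;> assumption
  have h1 : y 0 ≤ x 0 := by
    simpa [sum_filter, Fin.sum_univ_four] using hmaj.sum_val_lt_le hanti (k := 1) (by norm_num)
  have h2 : y 0 + y 1 ≤ x 0 + x 1 := by
    simpa [sum_filter, Fin.sum_univ_four] using hmaj.sum_val_lt_le hanti (k := 2) (by norm_num)
  have h3 : y 0 + y 1 + y 2 ≤ x 0 + x 1 + x 2 := by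
    simpa [sum_filter, Fin.sum_univ_four] using hmaj.sum_val_lt_le hanti (k := 3) (by norm_num)
  have hsum : y 0 + y 1 + y 2 + y 3 = x 0 + x 1 + x 2 + x 3 := by
    simpa [Fin.sum_univ_four] using hmaj.2
  refine boundaryFun_lt_of_sum_le hx12 hx23 hx3 hy12 hy23 h1 h2 h3 hsum fun h => hne ?_
  simp only [Prod.mk.injEq] at h
  funext i
  fin_cases i <;> simp [h]
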